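/- arXiv:2109.06276 — 9 statements merged into one kernel-verified Lean document; each statement's English description precedes it below -/
import Mathlib

section
/- Let f, g : ℝ → ℝ be continuous, ω : ℝ → ℝ, and let x, y : ℝ → ℝ be twice differentiable functions with x(t) ≠ 0 and y(t) ≠ 0 for all t, satisfying the generalized Ermakov system x'' = -ω(t)²x + f(y/x)/(x²y) and y'' = -ω(t)²y + g(x/y)/(xy²). Then the Ermakov invariant I₀(t) = (1/2)(x y' - y x')² + Φ(y(t)/x(t)) + Ψ(x(t)/y(t)) is constant along solutions, where Φ and Ψ are antiderivatives of f and g respectively. -/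
/-!
Writing `W = x y' - y x'`, the common frequency term drops out of `W' = x y'' - y x''`, leaving
`W' = g(x/y)/y² - f(y/x)/x²`, while `(y/x)' = W/x²` and `(x/y)' = -W/y²`. Hence the derivative
of `W²/2 + Φ(y/x) + Ψ(x/y)` is `W (g/y² - f/x²) + f W/x² - g W/y² = 0`.
-/

theorem hasDerivAt_wronskian_of_common_frequency {x y x' y' ω : ℝ → ℝ} {F G t : ℝ}
    (hx : HasDerivAt x (x' t) t) (hy : HasDerivAt y (y' t) t)
    (hx' : HasDerivAt x' (-(ω t) ^ 2 * x t + F) t)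
    (hy' : HasDerivAt y' (-(ω t) ^ 2 * y t + G) t) :
    HasDerivAt (fun s => x s * y' s - y s * x' s) (x t * G - y t * F) t :=
  ((hx.mul hy').sub (hy.mul hx')).congr_deriv (by ring)

theorem hasDerivAt_div_eq_wronskian {x y x' y' : ℝ → ℝ} {t : ℝ}
    (hx : HasDerivAt x (x' t) t) (hy : HasDerivAt y (y' t) t) (hx0 : x t ≠ 0) :
    HasDerivAt (fun s => y s / x s) ((x t * y' t - y t * x' t) / x t ^ 2) t :=
  (hy.div hx hx0).congr_deriv (by ring)

theorem ermakov_invariant_constant_general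
    (f g ω Φ Ψ x y x' y' : ℝ → ℝ)
    (hx0 : ∀ t, x t ≠ 0) (hy0 : ∀ t, y t ≠ 0)
    (hx : ∀ t, HasDerivAt x (x' t) t)
    (hy : ∀ t, HasDerivAt y (y' t) t)
    (hx' : ∀ t, HasDerivAt x' (-(ω t)^2 * x t + f (y t / x t) / ((x t)^2 * y t)) t)
    (hy' : ∀ t, HasDerivAt y' (-(ω t)^2 * y t + g (x t / y t) / (x t * (y t)^2)) t)
    (hΦ : ∀ u, HasDerivAt Φ (f u) u)
    (hΨ : ∀ u, HasDerivAt Ψ (g u) u) :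
    ∀ t, deriv (fun s => (1/2) * (x s * y' s - y s * x' s)^2
      + Φ (y s / x s) + Ψ (x s / y s)) t = 0 := by
  intro t
  have hW := hasDerivAt_wronskian_of_common_frequency (hx t) (hy t) (hx' t) (hy' t)
  have hyx := hasDerivAt_div_eq_wronskian (hx t) (hy t) (hx0 t)
  have hxy := hasDerivAt_div_eq_wronskian (hy t) (hx t) (hy0 t)
  have hI := (((hW.pow 2).const_mul (1/2)).add ((hΦ _).comp t hyx)).add ((hΨ _).comp t hxy)
  refine hI.deriv.trans ?_
  field_simp [hx0 t, hy0 t]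
  ring

/-- The Ermakov invariant of the 2d generalized Ermakov system is constant. -/
theorem ermakov_invariant_constant
    (f g ω Φ Ψ x y x' y' : ℝ → ℝ)
    (hf : Continuous f) (hg : Continuous g)
    (hx0 : ∀ t, x t ≠ 0) (hy0 : ∀ t, y t ≠ 0)
    (hx : ∀ t, HasDerivAt x (x' t) t)
    (hy : ∀ t, HasDerivAt y (y' t) t)
    (hx' : ∀ t, HasDerivAt x' (-(ω t)^2 * x t + f (y t / x t) / ((x t)^2 * y t)) t)
    (hy' : ∀ t, HasDerivAt y' (-(ω t)^2 * y t + g (x t / y t) / (x t * (y t)^2)) t)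
    (hΦ : ∀ u, HasDerivAt Φ (f u) u)
    (hΨ : ∀ u, HasDerivAt Ψ (g u) u) :
    ∀ t, deriv (fun s => (1/2) * (x s * y' s - y s * x' s)^2
      + Φ (y s / x s) + Ψ (x s / y s)) t = 0 :=
  ermakov_invariant_constant_general f g ω Φ Ψ x y x' y' hx0 hy0 hx hy hx' hy' hΦ hΨ
end

section
/- Let ρ : ℝ → ℝ be a positive twice differentiable solution of ρ'' + ω(t)²ρ = 0, and let x, y solve x'' = -ω(t)²x + F(y/x)/x³, y'' = -ω(t)²y + G(y/x)/y³. Define the new time T(t) = ∫₀ᵗ ρ(s)⁻²ds and set X = x/ρ, Y = y/ρ regarded as functions of T. Then X and Y satisfy the autonomous system d²X/dT² = F(Y/X)/X³ and d²Y/dT² = G(Y/X)/Y³. -/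
/-!
Write `W = z' ρ - z ρ'` for the Wronskian of `ρ` and `z`. Since `dT/dt = ρ⁻²`, the chain rule gives
`dZ/dT = ρ² (z/ρ)' = W`, and `W' = z'' ρ - z ρ'' = f ρ` because the `ω²` terms cancel. Hence
`d²Z/dT² = ρ² W' = f ρ³`; with `f = F(y/x)/x³` and `X = x/ρ` this is `F(Y/X)/X³` (similarly for `Y`).
-/

theorem deriv_eq_div_of_hasDerivAt_comp {Z T : ℝ → ℝ} {t τ u : ℝ}
    (hZ : DifferentiableAt ℝ Z (T t)) (hT : HasDerivAt T τ t) (hτ : τ ≠ 0)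
    (h : HasDerivAt (fun s => Z (T s)) u t) : deriv Z (T t) = u / τ :=
  eq_div_of_mul_eq hτ ((hZ.hasDerivAt.comp t hT).unique h)

theorem deriv_deriv_comp_eq_mul_pow_three {ω ρ ρ' z z' f Z T : ℝ → ℝ}
    (hρ0 : ∀ t, ρ t ≠ 0)
    (hρ : ∀ t, HasDerivAt ρ (ρ' t) t)
    (hρ' : ∀ t, HasDerivAt ρ' (-(ω t)^2 * ρ t) t)
    (hz : ∀ t, HasDerivAt z (z' t) t)
    (hz' : ∀ t, HasDerivAt z' (-(ω t)^2 * z t + f t) t)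
    (hT : ∀ t, HasDerivAt T ((ρ t)^2)⁻¹ t)
    (hZ : Differentiable ℝ Z) (hZ' : Differentiable ℝ (deriv Z))
    (hZT : ∀ t, Z (T t) = z t / ρ t) (t : ℝ) :
    deriv (deriv Z) (T t) = f t * (ρ t)^3 := by
  have hτ : ∀ s, ((ρ s)^2)⁻¹ ≠ 0 := fun s => inv_ne_zero (pow_ne_zero 2 (hρ0 s))
  have hW : ∀ s, deriv Z (T s) = z' s * ρ s - z s * ρ' s := by
    intro s
    have hquot : HasDerivAt (fun s => Z (T s)) ((z' s * ρ s - z s * ρ' s) / (ρ s)^2) s := by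
      simp only [hZT]
      exact (hz s).div (hρ s) (hρ0 s)
    rw [deriv_eq_div_of_hasDerivAt_comp (hZ _) (hT s) (hτ s) hquot]
    field_simp [hρ0 s]
  have hW' : HasDerivAt (fun s => deriv Z (T s)) (f t * ρ t) t := by
    rw [funext hW]
    exact (((hz' t).mul (hρ t)).sub ((hz t).mul (hρ' t))).congr_deriv (by ring)
  rw [deriv_eq_div_of_hasDerivAt_comp (hZ' _) (hT t) (hτ t) hW']
  field_simp

theorem ermakov_autonomous_form_general
    (ω F G ρ x y x' y' ρ' X Y : ℝ → ℝ) (T : ℝ → ℝ)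
    (hρpos : ∀ t, 0 < ρ t)
    (hρ : ∀ t, HasDerivAt ρ (ρ' t) t)
    (hρ' : ∀ t, HasDerivAt ρ' (-(ω t)^2 * ρ t) t)
    (hx : ∀ t, HasDerivAt x (x' t) t)
    (hy : ∀ t, HasDerivAt y (y' t) t)
    (hx' : ∀ t, HasDerivAt x' (-(ω t)^2 * x t + F (y t / x t) / (x t)^3) t)
    (hy' : ∀ t, HasDerivAt y' (-(ω t)^2 * y t + G (y t / x t) / (y t)^3) t)
    (hT : ∀ t, T t = ∫ s in (0:ℝ)..t, ((ρ s)^2)⁻¹)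
    (hX : Differentiable ℝ X) (hX' : Differentiable ℝ (deriv X))
    (hY : Differentiable ℝ Y) (hY' : Differentiable ℝ (deriv Y))
    (hXT : ∀ t, X (T t) = x t / ρ t)
    (hYT : ∀ t, Y (T t) = y t / ρ t) :
    ∀ t, deriv (deriv X) (T t) = F (Y (T t) / X (T t)) / (X (T t))^3 ∧
      deriv (deriv Y) (T t) = G (Y (T t) / X (T t)) / (Y (T t))^3 := by
  have hρ0 : ∀ t, ρ t ≠ 0 := fun t => (hρpos t).ne'
  have hTd : ∀ t, HasDerivAt T ((ρ t)^2)⁻¹ t := by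
    have hcont : Continuous fun s => ((ρ s)^2)⁻¹ :=
      ((continuous_iff_continuousAt.2 fun t => (hρ t).continuousAt).pow 2).inv₀
        fun s => pow_ne_zero 2 (hρ0 s)
    intro t
    rw [funext hT]
    exact (hcont.integral_hasStrictDerivAt 0 t).hasDerivAt
  intro t
  have hratio : Y (T t) / X (T t) = y t / x t := by
    rw [hXT, hYT, div_div_div_cancel_right₀ (hρ0 t)]
  constructor
  · rw [deriv_deriv_comp_eq_mul_pow_three hρ0 hρ hρ' hx hx' hTd hX hX' hXT, hratio, hXT,
      div_pow, div_div_eq_mul_div, div_mul_eq_mul_div]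
  · rw [deriv_deriv_comp_eq_mul_pow_three hρ0 hρ hρ' hy hy' hTd hY hY' hYT, hratio, hYT,
      div_pow, div_div_eq_mul_div, div_mul_eq_mul_div]

/-- The substitution T = ∫ρ⁻²dt, X = x/ρ, Y = y/ρ turns the time-dependent
generalized Ermakov system into the autonomous one. -/
theorem ermakov_autonomous_form
    (ω F G ρ x y x' y' ρ' X Y : ℝ → ℝ) (T : ℝ → ℝ)
    (hρpos : ∀ t, 0 < ρ t)
    (hρ : ∀ t, HasDerivAt ρ (ρ' t) t)
    (hρ' : ∀ t, HasDerivAt ρ' (-(ω t)^2 * ρ t) t)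
    (hx0 : ∀ t, x t ≠ 0) (hy0 : ∀ t, y t ≠ 0)
    (hx : ∀ t, HasDerivAt x (x' t) t)
    (hy : ∀ t, HasDerivAt y (y' t) t)
    (hx' : ∀ t, HasDerivAt x' (-(ω t)^2 * x t + F (y t / x t) / (x t)^3) t)
    (hy' : ∀ t, HasDerivAt y' (-(ω t)^2 * y t + G (y t / x t) / (y t)^3) t)
    (hT : ∀ t, T t = ∫ s in (0:ℝ)..t, ((ρ s)^2)⁻¹)
    (hX : Differentiable ℝ X) (hX' : Differentiable ℝ (deriv X))
    (hY : Differentiable ℝ Y) (hY' : Differentiable ℝ (deriv Y))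
    (hXT : ∀ t, X (T t) = x t / ρ t)
    (hYT : ∀ t, Y (T t) = y t / ρ t) :
    ∀ t, deriv (deriv X) (T t) = F (Y (T t) / X (T t)) / (X (T t))^3 ∧
      deriv (deriv Y) (T t) = G (Y (T t) / X (T t)) / (Y (T t))^3 :=
  ermakov_autonomous_form_general ω F G ρ x y x' y' ρ' X Y T hρpos hρ hρ' hx hy hx' hy' hT hX hX' hY
    hY' hXT hYT
end

section
/- Let N : ℝ → ℝ be differentiable and let X, Y : ℝ → ℝ satisfy X'' = (2N(u) + uN'(u))/X³, Y'' = -N'(u)/X³ with u = Y/X, X(T) ≠ 0. Let F(u) = 2N(u) + uN'(u) and G(u) = -u³N'(u), and let M(u) = (u²+1)N(u), so that M'(u) = uF(u) - u⁻³G(u). Then I₀ = (1/2)(XY' - YX')² + (u²+1)N(u) is a first integral of the system. -/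
/-- I₀ = (1/2)(XY'-YX')² + (u²+1)N(u) is a first integral of the
conservative generalized Ermakov system. -/
theorem ermakov_I0_first_integral
    (N N' : ℝ → ℝ) (X Y X' Y' : ℝ → ℝ)
    (hN : ∀ u, HasDerivAt N (N' u) u)
    (hX0 : ∀ T, X T ≠ 0)
    (hX : ∀ T, HasDerivAt X (X' T) T)
    (hY : ∀ T, HasDerivAt Y (Y' T) T)
    (hX' : ∀ T, HasDerivAt X'
      ((2 * N (Y T / X T) + (Y T / X T) * N' (Y T / X T)) / (X T)^3) T)
    (hY' : ∀ T, HasDerivAt Y' (-N' (Y T / X T) / (X T)^3) T) :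
    ∀ T, deriv (fun s => (1/2) * (X s * Y' s - Y s * X' s)^2
      + ((Y s / X s)^2 + 1) * N (Y s / X s)) T = 0 := by
  intro T
  have hXT := hX0 T
  have hu : HasDerivAt (fun s => Y s / X s)
      ((Y' T * X T - Y T * X' T) / (X T)^2) T := (hY T).div (hX T) hXT
  have hNu : HasDerivAt (fun s => N (Y s / X s))
      (N' (Y T / X T) * ((Y' T * X T - Y T * X' T) / (X T)^2)) T :=
    (hN (Y T / X T)).comp T hu
  -- W = X Y' - Y X'
  have hW : HasDerivAt (fun s => X s * Y' s - Y s * X' s)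
      (X' T * Y' T + X T * (-N' (Y T / X T) / (X T)^3)
        - (Y' T * X' T + Y T * ((2 * N (Y T / X T)
            + (Y T / X T) * N' (Y T / X T)) / (X T)^3))) T :=
    ((hX T).mul (hY' T)).sub ((hY T).mul (hX' T))
  have hW2 : HasDerivAt (fun s => (1/2 : ℝ) * (X s * Y' s - Y s * X' s)^2)
      ((1/2 : ℝ) * (2 * (X T * Y' T - Y T * X' T)
        * (X' T * Y' T + X T * (-N' (Y T / X T) / (X T)^3)
          - (Y' T * X' T + Y T * ((2 * N (Y T / X T)
              + (Y T / X T) * N' (Y T / X T)) / (X T)^3))))) T := by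
    simpa using (hW.pow 2).const_mul (1/2 : ℝ)
  have hu2 : HasDerivAt (fun s => ((Y s / X s)^2 + 1) * N (Y s / X s))
      ((2 * (Y T / X T) * ((Y' T * X T - Y T * X' T) / (X T)^2))
          * N (Y T / X T)
        + ((Y T / X T)^2 + 1)
          * (N' (Y T / X T) * ((Y' T * X T - Y T * X' T) / (X T)^2))) T := by
    have := ((hu.pow 2).add_const 1).mul hNu
    simpa [Pi.mul_def] using this
  have htot := hW2.add hu2
  rw [HasDerivAt.deriv (f := fun s => 1/2 * (X s * Y' s - Y s * X' s)^2 + ((Y s / X s)^2 + 1) * N (Y s / X s)) htot]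
  field_simp
  ring
end

section
/- Let X, Y : ℝ → ℝ satisfy the conservative Ermakov equations X'' = (2N(u)+uN'(u))/X³, Y'' = -N'(u)/X³ (u = Y/X, X ≠ 0), and let H = (1/2)(X'²+Y'²) + N(u)/X² (a constant along solutions). Then I₂(T) = 2TH - (X(T)X'(T) + Y(T)Y'(T)) is a first integral: dI₂/dT = 0. -/
/-- I₂ = 2TH - (XX' + YY') is a first integral of the conservative Ermakov system. -/
theorem ermakov_I2_first_integral
    (N N' : ℝ → ℝ) (X Y X' Y' : ℝ → ℝ)
    (hN : ∀ u, HasDerivAt N (N' u) u)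
    (hX0 : ∀ T, X T ≠ 0)
    (hX : ∀ T, HasDerivAt X (X' T) T)
    (hY : ∀ T, HasDerivAt Y (Y' T) T)
    (hX' : ∀ T, HasDerivAt X'
      ((2 * N (Y T / X T) + (Y T / X T) * N' (Y T / X T)) / (X T)^3) T)
    (hY' : ∀ T, HasDerivAt Y' (-N' (Y T / X T) / (X T)^3) T) :
    ∀ T, deriv (fun s =>
      2 * s * ((1/2) * ((X' s)^2 + (Y' s)^2) + N (Y s / X s) / (X s)^2)
      - (X s * X' s + Y s * Y' s)) T = 0 := by
  intro T
  have hu : HasDerivAt (fun s => Y s / X s)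
      ((Y' T * X T - Y T * X' T) / (X T)^2) T := (hY T).div (hX T) (hX0 T)
  have hNu : HasDerivAt (fun s => N (Y s / X s))
      (N' (Y T / X T) * ((Y' T * X T - Y T * X' T) / (X T)^2)) T :=
    (hN (Y T / X T)).comp T hu
  have hX2 : HasDerivAt (fun s => (X s)^2) (2 * X T ^ 1 * X' T) T :=
    (hX T).pow 2
  have hE : HasDerivAt (fun s =>
      (1/2) * ((X' s)^2 + (Y' s)^2) + N (Y s / X s) / (X s)^2)
      ((1/2) * (2 * X' T ^ 1 * ((2 * N (Y T / X T) + (Y T / X T) * N' (Y T / X T)) / (X T)^3)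
        + 2 * Y' T ^ 1 * (-N' (Y T / X T) / (X T)^3))
       + (N' (Y T / X T) * ((Y' T * X T - Y T * X' T) / (X T)^2) * (X T)^2
          - N (Y T / X T) * (2 * X T ^ 1 * X' T)) / ((X T)^2)^2) T :=
    ((((hX' T).pow 2).add ((hY' T).pow 2)).const_mul (1/2)).add
      (hNu.div hX2 (pow_ne_zero 2 (hX0 T)))
  have hI : HasDerivAt (fun s =>
      2 * s * ((1/2) * ((X' s)^2 + (Y' s)^2) + N (Y s / X s) / (X s)^2)
      - (X s * X' s + Y s * Y' s))
      ((2 * 1) * ((1/2) * ((X' T)^2 + (Y' T)^2) + N (Y T / X T) / (X T)^2)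
        + (2 * T) * ((1/2) * (2 * X' T ^ 1 * ((2 * N (Y T / X T) + (Y T / X T) * N' (Y T / X T)) / (X T)^3)
            + 2 * Y' T ^ 1 * (-N' (Y T / X T) / (X T)^3))
          + (N' (Y T / X T) * ((Y' T * X T - Y T * X' T) / (X T)^2) * (X T)^2
              - N (Y T / X T) * (2 * X T ^ 1 * X' T)) / ((X T)^2)^2)
        - (X' T * X' T + X T * ((2 * N (Y T / X T) + (Y T / X T) * N' (Y T / X T)) / (X T)^3)
            + (Y' T * Y' T + Y T * (-N' (Y T / X T) / (X T)^3)))) T :=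
    (((hasDerivAt_id T).const_mul 2).mul hE).sub
      (((hX T).mul (hX' T)).add ((hY T).mul (hY' T)))
  rw [hI.deriv]
  have hx := hX0 T
  field_simp
  ring
end

section
/- Under the same hypotheses, I₃(T) = T²H - T(XX' + YY') + (X² + Y²)/2 is a first integral of the conservative Ermakov system: dI₃/dT = 0. -/
/-!
Write `H = ½(X'² + Y'²) + N(Y/X)/X²`, `G = XX' + YY'` and `R = (X² + Y²)/2`, so that
`I₃ = T²H - TG + R`. Along solutions `H' = 0` (energy conservation), `R' = G`, and, because the
potential `N(Y/X)/X²` is homogeneous of degree `-2`, `XX'' + YY'' = 2N(Y/X)/X²`, which gives the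
Lagrange–Jacobi identity `G' = 2H`. Hence `I₃' = 2TH - G - T·2H + G = 0`.
-/

theorem hasDerivAt_sq_mul_sub_mul_add_eq_zero {H G R : ℝ → ℝ} {T : ℝ}
    (hH : HasDerivAt H 0 T) (hG : HasDerivAt G (2 * H T) T) (hR : HasDerivAt R (G T) T) :
    HasDerivAt (fun s => s ^ 2 * H s - s * G s + R s) 0 T := by
  have hsq : HasDerivAt (fun s : ℝ => s ^ 2) (2 * T) T := by
    simpa using hasDerivAt_pow 2 T
  refine (((hsq.fun_mul hH).fun_sub ((hasDerivAt_id' T).fun_mul hG)).fun_add hR).congr_deriv ?_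
  ring

section ErmakovSystem

variable {N N' X Y X' Y' : ℝ → ℝ} {T : ℝ}

theorem hasDerivAt_sq_add_sq_div_two (hX : HasDerivAt X (X' T) T)
    (hY : HasDerivAt Y (Y' T) T) :
    HasDerivAt (fun s => (X s ^ 2 + Y s ^ 2) / 2) (X T * X' T + Y T * Y' T) T := by
  refine (((hX.fun_pow 2).fun_add (hY.fun_pow 2)).div_const 2).congr_deriv ?_
  ring

theorem ermakov_lagrange_jacobi (hX0 : X T ≠ 0) (hX : HasDerivAt X (X' T) T)
    (hY : HasDerivAt Y (Y' T) T)
    (hX' : HasDerivAt X'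
      ((2 * N (Y T / X T) + (Y T / X T) * N' (Y T / X T)) / (X T) ^ 3) T)
    (hY' : HasDerivAt Y' (-N' (Y T / X T) / (X T) ^ 3) T) :
    HasDerivAt (fun s => X s * X' s + Y s * Y' s)
      (2 * ((1 / 2) * ((X' T) ^ 2 + (Y' T) ^ 2) + N (Y T / X T) / (X T) ^ 2)) T := by
  refine ((hX.fun_mul hX').fun_add (hY.fun_mul hY')).congr_deriv ?_
  field_simp
  ring

theorem ermakov_energy_conservation (hN : HasDerivAt N (N' (Y T / X T)) (Y T / X T))
    (hX0 : X T ≠ 0) (hX : HasDerivAt X (X' T) T) (hY : HasDerivAt Y (Y' T) T)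
    (hX' : HasDerivAt X'
      ((2 * N (Y T / X T) + (Y T / X T) * N' (Y T / X T)) / (X T) ^ 3) T)
    (hY' : HasDerivAt Y' (-N' (Y T / X T) / (X T) ^ 3) T) :
    HasDerivAt (fun s => (1 / 2) * ((X' s) ^ 2 + (Y' s) ^ 2) + N (Y s / X s) / (X s) ^ 2)
      0 T := by
  have hV := (hN.comp T (hY.fun_div hX hX0)).fun_div (hX.fun_pow 2) (pow_ne_zero 2 hX0)
  refine ((((hX'.fun_pow 2).fun_add (hY'.fun_pow 2)).const_mul (1 / 2 : ℝ)).fun_add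
    hV).congr_deriv ?_
  simp only [Function.comp_apply]
  field_simp
  ring

end ErmakovSystem

/-- I₃ = T²H - T(XX'+YY') + (X²+Y²)/2 is a first integral of the
conservative Ermakov system. -/
theorem ermakov_I3_first_integral
    (N N' : ℝ → ℝ) (X Y X' Y' : ℝ → ℝ)
    (hN : ∀ u, HasDerivAt N (N' u) u)
    (hX0 : ∀ T, X T ≠ 0)
    (hX : ∀ T, HasDerivAt X (X' T) T)
    (hY : ∀ T, HasDerivAt Y (Y' T) T)
    (hX' : ∀ T, HasDerivAt X'
      ((2 * N (Y T / X T) + (Y T / X T) * N' (Y T / X T)) / (X T)^3) T)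
    (hY' : ∀ T, HasDerivAt Y' (-N' (Y T / X T) / (X T)^3) T) :
    ∀ T, deriv (fun s =>
      s^2 * ((1/2) * ((X' s)^2 + (Y' s)^2) + N (Y s / X s) / (X s)^2)
      - s * (X s * X' s + Y s * Y' s)
      + (X s^2 + Y s^2) / 2) T = 0 := fun T =>
  (hasDerivAt_sq_mul_sub_mul_add_eq_zero
    (ermakov_energy_conservation (hN _) (hX0 T) (hX T) (hY T) (hX' T) (hY' T))
    (ermakov_lagrange_jacobi (hX0 T) (hX T) (hY T) (hX' T) (hY' T))
    (hasDerivAt_sq_add_sq_div_two (hX T) (hY T))).deriv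
end

section
/- For solutions of the conservative Ermakov system with H ≠ 0, the three first integrals satisfy the algebraic relation 4H·I₃ = I₂² + 2I₀, where H = (1/2)(X'²+Y'²) + N(u)/X², I₂ = 2TH - (XX'+YY'), I₃ = T²H - T(XX'+YY') + (X²+Y²)/2, and I₀ = (1/2)(XY'-YX')² + (u²+1)N(u) with u = Y/X. -/
/-- The algebraic relation 4H·I₃ = I₂² + 2I₀ among the first integrals of the
conservative Ermakov system. -/
theorem ermakov_integrals_relation
    (N : ℝ → ℝ) (X Y X' Y' T : ℝ) (hX : X ≠ 0)
    (hH : (1/2) * (X'^2 + Y'^2) + N (Y / X) / X^2 ≠ 0) :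
    4 * ((1/2) * (X'^2 + Y'^2) + N (Y / X) / X^2)
        * (T^2 * ((1/2) * (X'^2 + Y'^2) + N (Y / X) / X^2)
            - T * (X * X' + Y * Y') + (X^2 + Y^2) / 2)
      = (2 * T * ((1/2) * (X'^2 + Y'^2) + N (Y / X) / X^2)
            - (X * X' + Y * Y'))^2
        + 2 * ((1/2) * (X * Y' - Y * X')^2 + ((Y / X)^2 + 1) * N (Y / X)) := by
  set n := N (Y / X)
  field_simp
  ring
end

section
/- Let ω : ℝ → ℝ and let x, y : ℝ → ℝ be twice differentiable with y(t) ≠ 0, satisfying x'' = -ω(t)²x and y'' = -ω(t)²y + 1/y³. Then the Lewis invariant I₀ = (1/2)(xy' - yx')² + (1/2)(x/y)² is constant in t. -/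
/-!
Write `W = x y' - y x'` for the Wronskian and `u = x / y`. The two equations share the
term `-ω² ·`, so it cancels in `W' = x y'' - y x''`, leaving `W' = x / y³ = u / y²`, while
the quotient rule gives `u' = -W / y²`. Thus `(W, u)` moves by a rotation with angular speed
`1 / y²`, which preserves `W² + u²`.
-/

theorem hasDerivAt_wronskian_of_forced {x y x' y' : ℝ → ℝ} {t q f g : ℝ}
    (hx : HasDerivAt x (x' t) t) (hy : HasDerivAt y (y' t) t)
    (hx' : HasDerivAt x' (-q * x t + f) t) (hy' : HasDerivAt y' (-q * y t + g) t) :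
    HasDerivAt (fun s => x s * y' s - y s * x' s) (x t * g - y t * f) t :=
  ((hx.mul hy').sub (hy.mul hx')).congr_deriv (by ring)

theorem hasDerivAt_div_eq_neg_wronskian_div {x y x' y' : ℝ → ℝ} {t : ℝ}
    (hx : HasDerivAt x (x' t) t) (hy : HasDerivAt y (y' t) t) (hy0 : y t ≠ 0) :
    HasDerivAt (fun s => x s / y s) (-(1 / y t ^ 2 * (x t * y' t - y t * x' t))) t :=
  (hx.div hy hy0).congr_deriv (by field_simp; ring)

theorem hasDerivAt_half_sq_add_half_sq_of_rotation {W u : ℝ → ℝ} {k t : ℝ}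
    (hW : HasDerivAt W (k * u t) t) (hu : HasDerivAt u (-(k * W t)) t) :
    HasDerivAt (fun s => (1 / 2) * W s ^ 2 + (1 / 2) * u s ^ 2) 0 t :=
  (((hW.pow 2).const_mul (1 / 2)).add ((hu.pow 2).const_mul (1 / 2))).congr_deriv
    (by ring)

/-- The Lewis invariant of the time-dependent oscillator with the Pinney
auxiliary equation is constant. -/
theorem lewis_invariant_constant
    (ω x y x' y' : ℝ → ℝ)
    (hy0 : ∀ t, y t ≠ 0)
    (hx : ∀ t, HasDerivAt x (x' t) t)
    (hy : ∀ t, HasDerivAt y (y' t) t)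
    (hx' : ∀ t, HasDerivAt x' (-(ω t)^2 * x t) t)
    (hy' : ∀ t, HasDerivAt y' (-(ω t)^2 * y t + 1 / (y t)^3) t) :
    ∀ t, deriv (fun s => (1/2) * (x s * y' s - y s * x' s)^2
      + (1/2) * (x s / y s)^2) t = 0 := by
  intro t
  have hW : HasDerivAt (fun s => x s * y' s - y s * x' s) (1 / y t ^ 2 * (x t / y t)) t :=
    (hasDerivAt_wronskian_of_forced (f := 0) (hx t) (hy t) (by simpa using hx' t)
      (hy' t)).congr_deriv (by field_simp [hy0 t]; ring)
  exact (hasDerivAt_half_sq_add_half_sq_of_rotation hW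
    (hasDerivAt_div_eq_neg_wronskian_div (hx t) (hy t) (hy0 t))).deriv
end

section
/- Under the same hypotheses (X'' = -∂V₁/∂X, Y'' = -∂V₁/∂Y with V₁ = k/(b₁Y - b₂X)²), the quantity I₃₁(T) = b₁(-TX'(T) + X(T)) + b₂(-TY'(T) + Y(T)) is a first integral. -/
/-!
The potential `V₁ = k / (b₁Y - b₂X)²` depends on `(X, Y)` only through `b₁Y - b₂X`, so it is
invariant under translations along `(b₁, b₂)` and the force has no component in that
direction. Hence the momentum `I₂₁ = b₁X' + b₂Y'` is conserved, and
`I₃₁ = -T · I₂₁ + (b₁X + b₂Y)` has derivative `-I₂₁ + (b₁X' + b₂Y') = 0`.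
-/

lemma deriv_comp_const_sub_mul (g : ℝ → ℝ) (a b x : ℝ) :
    deriv (fun s => g (a - b * s)) x = -b * deriv g (a - b * x) := by
  rw [deriv_comp_mul_left (f := fun t => g (a - t)), deriv_comp_const_sub, smul_eq_mul]
  ring

lemma deriv_comp_mul_sub_const (g : ℝ → ℝ) (a b y : ℝ) :
    deriv (fun s => g (a * s - b)) y = a * deriv g (a * y - b) := by
  rw [deriv_comp_mul_left (f := fun t => g (t - b)), deriv_comp_sub_const, smul_eq_mul]

/-- No differentiability of `g` is needed: both partial derivatives are multiples of the same,
possibly junk, value `deriv g (b₁ * y - b₂ * x)`. -/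
lemma gradient_orthogonal_of_potential_comp_sub (g : ℝ → ℝ) (b₁ b₂ x y : ℝ) :
    b₁ * deriv (fun s => g (b₁ * y - b₂ * s)) x
      + b₂ * deriv (fun s => g (b₁ * s - b₂ * x)) y = 0 := by
  rw [deriv_comp_const_sub_mul, deriv_comp_mul_sub_const]
  ring

section ConservedAlongDirection

variable {b₁ b₂ : ℝ} {X Y X' Y' Fx Fy : ℝ → ℝ}

lemma hasDerivAt_momentum_zero
    (hX' : ∀ T, HasDerivAt X' (Fx T) T) (hY' : ∀ T, HasDerivAt Y' (Fy T) T)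
    (horth : ∀ T, b₁ * Fx T + b₂ * Fy T = 0) (T : ℝ) :
    HasDerivAt (fun s => b₁ * X' s + b₂ * Y' s) 0 T := by
  simpa only [horth T] using ((hX' T).const_mul b₁).fun_add ((hY' T).const_mul b₂)

lemma hasDerivAt_boost_integral_zero
    (hX : ∀ T, HasDerivAt X (X' T) T) (hY : ∀ T, HasDerivAt Y (Y' T) T)
    (hX' : ∀ T, HasDerivAt X' (Fx T) T) (hY' : ∀ T, HasDerivAt Y' (Fy T) T)
    (horth : ∀ T, b₁ * Fx T + b₂ * Fy T = 0) (T : ℝ) :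
    HasDerivAt (fun s => b₁ * (-s * X' s + X s) + b₂ * (-s * Y' s + Y s)) 0 T := by
  have hP := hasDerivAt_momentum_zero hX' hY' horth T
  have hQ := ((hX T).const_mul b₁).fun_add ((hY T).const_mul b₂)
  have hI : (fun s => b₁ * (-s * X' s + X s) + b₂ * (-s * Y' s + Y s))
      = fun s => -s * (b₁ * X' s + b₂ * Y' s) + (b₁ * X s + b₂ * Y s) := by
    funext s
    ring
  rw [hI]
  exact (((hasDerivAt_id' T).fun_neg.fun_mul hP).fun_add hQ).congr_deriv (by ring)

end ConservedAlongDirection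

theorem noether_integral_I31_V1_general
    (k b₁ b₂ : ℝ) (X Y X' Y' : ℝ → ℝ)
    (hX : ∀ T, HasDerivAt X (X' T) T)
    (hY : ∀ T, HasDerivAt Y (Y' T) T)
    (hX' : ∀ T, HasDerivAt X'
      (-deriv (fun s => k / (b₁ * Y T - b₂ * s)^2) (X T)) T)
    (hY' : ∀ T, HasDerivAt Y'
      (-deriv (fun s => k / (b₁ * s - b₂ * X T)^2) (Y T)) T) :
    ∀ T, deriv (fun s => b₁ * (-s * X' s + X s) + b₂ * (-s * Y' s + Y s)) T = 0 := by
  have horth : ∀ T, b₁ * -deriv (fun s => k / (b₁ * Y T - b₂ * s)^2) (X T)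
      + b₂ * -deriv (fun s => k / (b₁ * s - b₂ * X T)^2) (Y T) = 0 := fun T => by
    linear_combination
      -gradient_orthogonal_of_potential_comp_sub (fun u => k / u ^ 2) b₁ b₂ (X T) (Y T)
  exact fun T => (hasDerivAt_boost_integral_zero hX hY hX' hY' horth T).deriv

/-- The time-dependent Noether integral I₃₁ = b₁(-TX' + X) + b₂(-TY' + Y) is a
first integral for the potential V₁ = k/(b₁Y - b₂X)². -/
theorem noether_integral_I31_V1
    (k b₁ b₂ : ℝ) (X Y X' Y' : ℝ → ℝ)
    (hne : ∀ T, b₁ * Y T - b₂ * X T ≠ 0)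
    (hX : ∀ T, HasDerivAt X (X' T) T)
    (hY : ∀ T, HasDerivAt Y (Y' T) T)
    (hX' : ∀ T, HasDerivAt X'
      (-deriv (fun s => k / (b₁ * Y T - b₂ * s)^2) (X T)) T)
    (hY' : ∀ T, HasDerivAt Y'
      (-deriv (fun s => k / (b₁ * s - b₂ * X T)^2) (Y T)) T) :
    ∀ T, deriv (fun s => b₁ * (-s * X' s + X s) + b₂ * (-s * Y' s + Y s)) T = 0 :=
  noether_integral_I31_V1_general k b₁ b₂ X Y X' Y' hX hY hX' hY'
end

section
/- Let H > 0, I₂, I₀ be constants and suppose X, Y : ℝ → ℝ solve the conservative Ermakov system with these values of the first integrals H = (1/2)(X'²+Y'²) + N(u)/X², I₂ = 2TH - (XX'+YY'), I₀ = (1/2)(XY'-YX')² + (u²+1)N(u). Then r(T)² := X(T)² + Y(T)² satisfies r(T)² = (2HT - I₂)²/(2H) + I₀/H. -/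
/-!
Lagrange's identity `(x² + y²)(x'² + y'²) = (x x' + y y')² + (x y' - y x')²`, together with
`(x² + y²) N(u) / x² = (u² + 1) N(u)` for `u = y / x`, gives `2 H r² = (X X' + Y Y')² + 2 I₀` at
each instant; the homothetic integral turns `X X' + Y Y'` into `2 H T - I₂`, and `H > 0` lets us
divide.
-/

theorem lagrange_identity_add_potential {K : Type*} [Field K] {x y vx vy n : K} (hx : x ≠ 0) :
    (vx^2 + vy^2 + 2 * n / x^2) * (x^2 + y^2)
      = (x * vx + y * vy)^2 + (x * vy - y * vx)^2 + 2 * ((y / x)^2 + 1) * n := by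
  field_simp
  ring

theorem ermakov_radial_solution_general
    (N : ℝ → ℝ) (X Y X' Y' : ℝ → ℝ) (H I₂ I₀ : ℝ)
    (hX0 : ∀ T, X T ≠ 0)
    (hHpos : 0 < H)
    (hH : ∀ T, H = (1/2) * ((X' T)^2 + (Y' T)^2) + N (Y T / X T) / (X T)^2)
    (hI2 : ∀ T, I₂ = 2 * T * H - (X T * X' T + Y T * Y' T))
    (hI0 : ∀ T, I₀ = (1/2) * (X T * Y' T - Y T * X' T)^2
        + ((Y T / X T)^2 + 1) * N (Y T / X T)) :
    ∀ T, X T^2 + Y T^2 = (2 * H * T - I₂)^2 / (2 * H) + I₀ / H := by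
  intro T
  have hvirial : 2 * H * T - I₂ = X T * X' T + Y T * Y' T := by linarith [hI2 T]
  have hidentity : 2 * H * (X T^2 + Y T^2) = (2 * H * T - I₂)^2 + 2 * I₀ := by
    rw [hvirial, hH T, hI0 T]
    linear_combination
      lagrange_identity_add_potential (y := Y T) (vx := X' T) (vy := Y' T) (n := N (Y T / X T)) (hX0 T)
  field_simp
  linear_combination hidentity

/-- The radial solution formula r² = (2HT - I₂)²/(2H) + I₀/H for the
conservative Ermakov system. -/
theorem ermakov_radial_solution
    (N N' : ℝ → ℝ) (X Y X' Y' : ℝ → ℝ) (H I₂ I₀ : ℝ)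
    (hN : ∀ u, HasDerivAt N (N' u) u)
    (hX0 : ∀ T, X T ≠ 0)
    (hX : ∀ T, HasDerivAt X (X' T) T)
    (hY : ∀ T, HasDerivAt Y (Y' T) T)
    (hX' : ∀ T, HasDerivAt X'
      ((2 * N (Y T / X T) + (Y T / X T) * N' (Y T / X T)) / (X T)^3) T)
    (hY' : ∀ T, HasDerivAt Y' (-N' (Y T / X T) / (X T)^3) T)
    (hHpos : 0 < H)
    (hH : ∀ T, H = (1/2) * ((X' T)^2 + (Y' T)^2) + N (Y T / X T) / (X T)^2)
    (hI2 : ∀ T, I₂ = 2 * T * H - (X T * X' T + Y T * Y' T))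
    (hI0 : ∀ T, I₀ = (1/2) * (X T * Y' T - Y T * X' T)^2
        + ((Y T / X T)^2 + 1) * N (Y T / X T)) :
    ∀ T, X T^2 + Y T^2 = (2 * H * T - I₂)^2 / (2 * H) + I₀ / H :=
  ermakov_radial_solution_general N X Y X' Y' H I₂ I₀ hX0 hHpos hH hI2 hI0
end
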